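/- Let S be finite with |S| = κ ≥ 2, α > 1, m a probability measure on S with maximizer set S_⋆ and maximum value M_⋆, and r irreducible reversible jump rates. Let μ_N be the stationary measure of the zero-range process on E_N with rates g(k)r(x,y). Let ℓ_N → ∞ with ℓ_N/N → 0 and b_N(z) → ∞ for z ∉ S_⋆, and Δ_N the complement in E_N of ∪_{x∈S_⋆} E^x_N where E^x_N = {η : η_x ≥ N − ℓ_N, η_z ≤ b_N(z) ∀ z ∉ S_⋆}. Then μ_N(Δ_N) → 0 as N → ∞. -/

import Mathlib

/-!
The partition function is at least the weight `N^{-α}` of a single condensate, so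
`μ_N(A) ≤ N^α w(A)` for the product weight `w(η) = ∏ m_⋆(x)^{η_x} / a(η_x)`. Every configuration
has a site `x` carrying at least `N/κ` particles, whose factor is at most
`m_⋆(x)^{N/κ} (κ/N)^α` and so absorbs `N^α`; as `∑ 1/a(k) < ∞` for `α > 1`, the other sites
contribute a bounded product of sums. A configuration of `Δ_N` either has this large site
outside `S_⋆`, which costs `m_⋆(x)^{N/κ} → 0`, or has a second site above a level tending to
infinity, which costs a tail of `∑ 1/a(k)`.
-/

noncomputable def aZR (α : ℝ) (n : ℕ) : ℝ := if n = 0 then 1 else (n : ℝ) ^ α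

def confs (S : Type*) [Fintype S] [DecidableEq S] (N : ℕ) : Finset (S → ℕ) :=
  (Fintype.piFinset fun _ => Finset.range (N + 1)).filter (fun η => ∑ x, η x = N)

open Filter Finset Topology

lemma aZR_pos (α : ℝ) (n : ℕ) : 0 < aZR α n := by
  unfold aZR
  split_ifs with h
  · exact one_pos
  · exact Real.rpow_pos_of_pos (Nat.cast_pos.2 (Nat.pos_of_ne_zero h)) α

lemma summable_inv_aZR {α : ℝ} (hα : 1 < α) : Summable fun n => (aZR α n)⁻¹ := by
  rw [← summable_nat_add_iff 1]
  refine ((summable_nat_add_iff 1).2 (Real.summable_nat_rpow_inv.2 hα)).congr fun n => ?_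
  simp [aZR]

lemma pow_div_aZR_nonneg {α c : ℝ} (hc : 0 ≤ c) (k : ℕ) : 0 ≤ c ^ k / aZR α k :=
  div_nonneg (pow_nonneg hc k) (aZR_pos α k).le

lemma pow_div_aZR_le_inv {α c : ℝ} (hc0 : 0 ≤ c) (hc1 : c ≤ 1) (k : ℕ) :
    c ^ k / aZR α k ≤ (aZR α k)⁻¹ := by
  rw [div_eq_mul_inv]
  exact mul_le_of_le_one_left (inv_pos.2 (aZR_pos α k)).le (pow_le_one₀ hc0 hc1)

lemma rpow_div_aZR_le {α : ℝ} (hα : 0 ≤ α) {N κ k : ℕ} (hN : 0 < N) (h : N ≤ κ * k) :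
    (N : ℝ) ^ α / aZR α k ≤ (κ : ℝ) ^ α := by
  have hk : k ≠ 0 := by rintro rfl; omega
  rw [aZR, if_neg hk, ← Real.div_rpow (Nat.cast_nonneg _) (Nat.cast_nonneg _)]
  refine Real.rpow_le_rpow (by positivity) ?_ hα
  rw [div_le_iff₀ (Nat.cast_pos.2 (Nat.pos_of_ne_zero hk))]
  exact_mod_cast h

lemma sum_le_tsum_nat_add {g : ℕ → ℝ} (hg : Summable g) (hg0 : ∀ n, 0 ≤ g n) {s : Finset ℕ}
    {t : ℕ} (hs : ∀ k ∈ s, t ≤ k) : ∑ k ∈ s, g k ≤ ∑' k, g (k + t) := by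
  have hshift : ∑ k ∈ s, g k = ∑ j ∈ s.image (· - t), g (j + t) := by
    rw [sum_image fun a ha b hb hab => by have := hs a ha; have := hs b hb; omega]
    exact sum_congr rfl fun k hk => by rw [Nat.sub_add_cancel (hs k hk)]
  rw [hshift]
  exact ((summable_nat_add_iff t).2 hg).sum_le_tsum _ fun j _ => hg0 _

lemma sum_le_sum_sum_filter_of_forall_exists {ι β : Type*} {s : Finset β} {I : Finset ι}
    {P : ι → β → Prop} [∀ i, DecidablePred (P i)] {f : β → ℝ} (hf : ∀ b ∈ s, 0 ≤ f b)
    (h : ∀ b ∈ s, ∃ i ∈ I, P i b) : ∑ b ∈ s, f b ≤ ∑ i ∈ I, ∑ b ∈ s.filter (P i), f b := by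
  calc ∑ b ∈ s, f b ≤ ∑ b ∈ s, ∑ i ∈ I, if P i b then f b else 0 := by
        refine sum_le_sum fun b hb => ?_
        obtain ⟨i, hi, hP⟩ := h b hb
        calc f b = if P i b then f b else 0 := (if_pos hP).symm
          _ ≤ _ := single_le_sum (f := fun i => if P i b then f b else 0)
            (fun j _ => by split_ifs <;> simp [hf b hb]) hi
    _ = ∑ i ∈ I, ∑ b ∈ s.filter (P i), f b := by
        rw [sum_comm]
        simp_rw [sum_filter]

lemma sum_prod_le_prod_sum_of_injOn {ι κ γ : Type*} [Fintype ι] [DecidableEq ι] [DecidableEq γ]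
    {B : Finset κ} {r : κ → ι → γ} (hr : Set.InjOn r B) {s : ι → Finset γ}
    (hs : ∀ b ∈ B, ∀ i, r b i ∈ s i) {f : ι → γ → ℝ} (hf : ∀ i k, 0 ≤ f i k) :
    ∑ b ∈ B, ∏ i, f i (r b i) ≤ ∏ i, ∑ k ∈ s i, f i k := by
  rw [prod_univ_sum, ← sum_image (f := fun η => ∏ i, f i (η i)) hr]
  refine sum_le_sum_of_subset_of_nonneg ?_ fun _ _ _ => prod_nonneg fun i _ => hf _ _
  exact image_subset_iff.2 fun b hb => Fintype.mem_piFinset.2 (hs b hb)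

lemma sum_pow_div_aZR_le_tsum {α c : ℝ} (hα : 1 < α) (hc0 : 0 ≤ c) (hc1 : c ≤ 1)
    {s : Finset ℕ} {t : ℕ} (hs : ∀ k ∈ s, t ≤ k) :
    ∑ k ∈ s, c ^ k / aZR α k ≤ ∑' k, (aZR α (k + t))⁻¹ :=
  (sum_le_sum fun k _ => pow_div_aZR_le_inv hc0 hc1 k).trans
    (sum_le_tsum_nat_add (summable_inv_aZR hα) (fun n => (inv_pos.2 (aZR_pos α n)).le) hs)

lemma prod_sum_pow_div_aZR_le {ι : Type*} [Fintype ι] {α : ℝ} (hα : 1 < α) {c : ι → ℝ}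
    (hc0 : ∀ i, 0 ≤ c i) (hc1 : ∀ i, c i ≤ 1) (s : ι → Finset ℕ) :
    ∏ i, ∑ k ∈ s i, c i ^ k / aZR α k ≤ (∑' k, (aZR α k)⁻¹) ^ Fintype.card ι := by
  calc ∏ i, ∑ k ∈ s i, c i ^ k / aZR α k ≤ ∏ _i : ι, ∑' k, (aZR α k)⁻¹ := by
        refine prod_le_prod (fun i _ => sum_nonneg fun k _ => ?_) fun i _ => ?_
        · exact pow_div_aZR_nonneg (hc0 i) k
        · simpa using sum_pow_div_aZR_le_tsum hα (hc0 i) (hc1 i) (fun k _ => Nat.zero_le k)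
    _ = _ := by rw [prod_const, card_univ]

section ZeroRange

variable {S : Type*} [Fintype S]

noncomputable def zrWeight (α : ℝ) (c : S → ℝ) (η : S → ℕ) : ℝ := ∏ x, c x ^ η x / aZR α (η x)

lemma zrWeight_nonneg {α : ℝ} {c : S → ℝ} (hc0 : ∀ x, 0 ≤ c x) (η : S → ℕ) :
    0 ≤ zrWeight α c η :=
  prod_nonneg fun x _ => pow_div_aZR_nonneg (hc0 x) _

variable [DecidableEq S]

lemma mem_range_of_mem_confs {N : ℕ} {η : S → ℕ} (hη : η ∈ confs S N) (z : S) :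
    η z ∈ range (N + 1) :=
  Fintype.mem_piFinset.1 (mem_filter.1 hη).1 z

lemma mem_confs {N : ℕ} {η : S → ℕ} : η ∈ confs S N ↔ ∑ x, η x = N := by
  refine ⟨fun h => (mem_filter.1 h).2, fun h => mem_filter.2 ⟨?_, h⟩⟩
  refine Fintype.mem_piFinset.2 fun x => mem_range.2 (Nat.lt_succ_of_le ?_)
  exact h ▸ single_le_sum (fun _ _ => Nat.zero_le _) (mem_univ x)

lemma injOn_restrict_ne_confs (x : S) (N : ℕ) :
    Set.InjOn (fun (η : S → ℕ) (z : {z // z ≠ x}) => η z) (confs S N) := by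
  intro η₁ h₁ η₂ h₂ h
  have hoff : ∀ z, z ≠ x → η₁ z = η₂ z := fun z hz => congrFun h ⟨z, hz⟩
  have hx : η₁ x = η₂ x := by
    have e₁ := mem_confs.1 h₁
    have e₂ := mem_confs.1 h₂
    rw [Fintype.sum_eq_add_sum_subtype_ne _ x] at e₁ e₂
    have hrest : ∑ z : {z // z ≠ x}, η₁ z = ∑ z : {z // z ≠ x}, η₂ z :=
      sum_congr rfl fun z _ => hoff z z.2
    omega
  funext z
  by_cases hz : z = x
  · exact hz ▸ hx
  · exact hoff z hz

lemma exists_le_mul_of_mem_confs [Nonempty S] {N : ℕ} {η : S → ℕ} (hη : η ∈ confs S N) :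
    ∃ x, N ≤ Fintype.card S * η x := by
  obtain ⟨x, -, hx⟩ := exists_le_of_sum_le (f := fun _ => N)
    (g := fun x => Fintype.card S * η x) univ_nonempty (by simp [← mul_sum, mem_confs.1 hη])
  exact ⟨x, hx⟩

lemma exists_ne_div_le_of_lt_sub {N ℓ : ℕ} {η : S → ℕ} (hη : η ∈ confs S N) {x : S}
    (hx : η x < N - ℓ) : ∃ y ≠ x, ℓ / Fintype.card S ≤ η y := by
  have hsum : η x + ∑ y ∈ univ.erase x, η y = N := by
    rw [add_sum_erase _ _ (mem_univ x)]
    exact mem_confs.1 hη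
  have hlt : ∑ _y ∈ univ.erase x, ℓ / Fintype.card S < ∑ y ∈ univ.erase x, η y := by
    rw [sum_const, smul_eq_mul]
    calc #(univ.erase x) * (ℓ / Fintype.card S) ≤ Fintype.card S * (ℓ / Fintype.card S) :=
          Nat.mul_le_mul_right _ (card_erase_le.trans_eq card_univ)
      _ ≤ ℓ := Nat.mul_div_le ℓ _
      _ < _ := by omega
  obtain ⟨y, hy, hly⟩ := exists_lt_of_sum_lt hlt
  exact ⟨y, ne_of_mem_erase hy, hly.le⟩

def secondSiteThreshold (Sstar : Finset S) (ℓ : ℕ) (b : S → ℕ) (y : S) : ℕ :=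
  if y ∈ Sstar then ℓ / Fintype.card S else ℓ / Fintype.card S ⊓ (b y + 1)

lemma tendsto_secondSiteThreshold [Nonempty S] {Sstar : Finset S} {ℓ : ℕ → ℕ}
    (hℓ : Tendsto ℓ atTop atTop) {b : S → ℕ → ℕ}
    (hb : ∀ z ∉ Sstar, Tendsto (b z) atTop atTop) (y : S) :
    Tendsto (fun N => secondSiteThreshold Sstar (ℓ N) (b · N) y) atTop atTop := by
  have hℓκ : Tendsto (fun N => ℓ N / Fintype.card S) atTop atTop :=
    (Nat.tendsto_div_const_atTop Fintype.card_ne_zero).comp hℓ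
  by_cases hy : y ∈ Sstar
  · simpa [secondSiteThreshold, hy] using hℓκ
  · simpa [secondSiteThreshold, hy] using
      tendsto_inf_atTop _ hℓκ (tendsto_atTop_mono (fun _ => Nat.le_succ _) (hb y hy))

lemma exists_ne_secondSiteThreshold_le {Sstar : Finset S} {N ℓ : ℕ} {b : S → ℕ} {η : S → ℕ}
    (hη : η ∈ confs S N) {x : S} (hx : x ∈ Sstar)
    (hnot : ¬ (N - ℓ ≤ η x ∧ ∀ z ∉ Sstar, η z ≤ b z)) :
    ∃ y ≠ x, secondSiteThreshold Sstar ℓ b y ≤ η y := by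
  by_cases hηx : N - ℓ ≤ η x
  · obtain ⟨z, hz, hbz⟩ : ∃ z ∉ Sstar, b z < η z := by simpa [hηx] using hnot
    refine ⟨z, fun h => hz (h ▸ hx), ?_⟩
    simpa only [secondSiteThreshold, if_neg hz] using inf_le_right.trans hbz
  · obtain ⟨y, hyx, hy⟩ := exists_ne_div_le_of_lt_sub hη (not_le.1 hηx)
    refine ⟨y, hyx, le_trans ?_ hy⟩
    unfold secondSiteThreshold
    split_ifs
    exacts [le_rfl, inf_le_left]

variable {α : ℝ} {c : S → ℝ}

lemma zrWeight_single {x₀ : S} (hx₀ : c x₀ = 1) (N : ℕ) :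
    zrWeight α c (Pi.single x₀ N) = (aZR α N)⁻¹ := by
  rw [zrWeight, Fintype.prod_eq_single x₀ fun x hx => by simp [hx, aZR]]
  simp [hx₀]

lemma inv_aZR_le_sum_zrWeight (hc0 : ∀ x, 0 ≤ c x) {x₀ : S} (hx₀ : c x₀ = 1) (N : ℕ) :
    (aZR α N)⁻¹ ≤ ∑ η ∈ confs S N, zrWeight α c η := by
  rw [← zrWeight_single hx₀ N]
  exact single_le_sum (fun η _ => zrWeight_nonneg hc0 η) (mem_confs.2 (by simp))

lemma sum_normalized_zrWeight_le (hc0 : ∀ x, 0 ≤ c x) {x₀ : S} (hx₀ : c x₀ = 1) {N : ℕ}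
    (hN : N ≠ 0) (A : Finset (S → ℕ)) :
    ∑ η ∈ A, (N : ℝ) ^ α / ((N : ℝ) ^ α * ∑ ζ ∈ confs S N, zrWeight α c ζ) * zrWeight α c η ≤
      (N : ℝ) ^ α * ∑ η ∈ A, zrWeight α c η := by
  have hNα : 0 < (N : ℝ) ^ α := by positivity
  have hnorm : ((N : ℝ) ^ α)⁻¹ ≤ ∑ ζ ∈ confs S N, zrWeight α c ζ := by
    simpa [aZR, hN] using inv_aZR_le_sum_zrWeight (α := α) hc0 hx₀ N
  rw [← mul_sum, div_mul_cancel_left₀ hNα.ne']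
  exact mul_le_mul_of_nonneg_right (inv_le_of_inv_le₀ hNα hnorm)
    (sum_nonneg fun η _ => zrWeight_nonneg hc0 η)

lemma rpow_mul_zrWeight_le (hα : 0 ≤ α) (hc0 : ∀ x, 0 ≤ c x) (hc1 : ∀ x, c x ≤ 1) {N : ℕ}
    (hN : 0 < N) {η : S → ℕ} {x : S} (hx : N ≤ Fintype.card S * η x) :
    (N : ℝ) ^ α * zrWeight α c η ≤ (Fintype.card S : ℝ) ^ α * c x ^ (N / Fintype.card S) *
      ∏ z : {z // z ≠ x}, c z ^ η z / aZR α (η z) := by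
  rw [zrWeight, Fintype.prod_eq_mul_prod_subtype_ne _ x, ← mul_assoc]
  refine mul_le_mul_of_nonneg_right ?_
    (prod_nonneg fun z _ => pow_div_aZR_nonneg (hc0 z) _)
  calc (N : ℝ) ^ α * (c x ^ η x / aZR α (η x)) = c x ^ η x * ((N : ℝ) ^ α / aZR α (η x)) := by
        ring
    _ ≤ c x ^ (N / Fintype.card S) * (Fintype.card S : ℝ) ^ α :=
        mul_le_mul (pow_le_pow_of_le_one (hc0 x) (hc1 x) (Nat.div_le_of_le_mul hx))
          (rpow_div_aZR_le hα hN hx) (div_nonneg (by positivity) (aZR_pos α _).le)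
          (pow_nonneg (hc0 x) _)
    _ = _ := mul_comm _ _

lemma rpow_mul_sum_zrWeight_le (hα : 0 ≤ α) (hc0 : ∀ x, 0 ≤ c x) (hc1 : ∀ x, c x ≤ 1)
    {N : ℕ} (hN : 0 < N) {x : S} {B : Finset (S → ℕ)} (hB : B ⊆ confs S N)
    (hBx : ∀ η ∈ B, N ≤ Fintype.card S * η x) {s : {z // z ≠ x} → Finset ℕ}
    (hs : ∀ η ∈ B, ∀ z, η z ∈ s z) :
    (N : ℝ) ^ α * ∑ η ∈ B, zrWeight α c η ≤ (Fintype.card S : ℝ) ^ α *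
      c x ^ (N / Fintype.card S) * ∏ z, ∑ k ∈ s z, c z ^ k / aZR α k := by
  rw [mul_sum]
  refine (sum_le_sum fun η hη => rpow_mul_zrWeight_le hα hc0 hc1 hN (hBx η hη)).trans ?_
  rw [← mul_sum]
  refine mul_le_mul_of_nonneg_left ?_ (mul_nonneg (by positivity) (pow_nonneg (hc0 x) _))
  exact sum_prod_le_prod_sum_of_injOn ((injOn_restrict_ne_confs x N).mono hB) hs
    fun z k => pow_div_aZR_nonneg (hc0 z) k

lemma tendsto_rpow_mul_sum_zrWeight_of_lt_one (hα : 1 < α) (hc0 : ∀ x, 0 ≤ c x)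
    (hc1 : ∀ x, c x ≤ 1) {x : S} (hx : c x < 1) :
    Tendsto (fun N : ℕ => (N : ℝ) ^ α * ∑ η ∈ (confs S N).filter
      (fun η => N ≤ Fintype.card S * η x), zrWeight α c η) atTop (𝓝 0) := by
  have : Nonempty S := ⟨x⟩
  have hlim : Tendsto (fun N : ℕ => (Fintype.card S : ℝ) ^ α * c x ^ (N / Fintype.card S) *
      (∑' k, (aZR α k)⁻¹) ^ Fintype.card {z // z ≠ x}) atTop (𝓝 0) := by
    simpa using (((tendsto_pow_atTop_nhds_zero_of_lt_one (hc0 x) hx).comp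
      (Nat.tendsto_div_const_atTop Fintype.card_ne_zero)).const_mul _).mul_const _
  refine squeeze_zero' (Eventually.of_forall fun N =>
    mul_nonneg (by positivity) (sum_nonneg fun η _ => zrWeight_nonneg hc0 η)) ?_ hlim
  filter_upwards [eventually_gt_atTop 0] with N hN
  refine (rpow_mul_sum_zrWeight_le (zero_lt_one.trans hα).le hc0 hc1 hN (filter_subset _ _)
    (fun η hη => (mem_filter.1 hη).2) (s := fun _ => range (N + 1))
    (fun η hη z => mem_range_of_mem_confs (mem_filter.1 hη).1 z)).trans ?_
  exact mul_le_mul_of_nonneg_left (prod_sum_pow_div_aZR_le hα (c := fun z : {z // z ≠ x} => c z)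
    (fun z => hc0 z) (fun z => hc1 z) _)
    (mul_nonneg (by positivity) (pow_nonneg (hc0 x) _))

lemma tendsto_rpow_mul_sum_zrWeight_of_tendsto (hα : 1 < α) (hc0 : ∀ x, 0 ≤ c x)
    (hc1 : ∀ x, c x ≤ 1) {x y : S} (hxy : x ≠ y) {θ : ℕ → ℕ} (hθ : Tendsto θ atTop atTop) :
    Tendsto (fun N : ℕ => (N : ℝ) ^ α * ∑ η ∈ (confs S N).filter
      (fun η => N ≤ Fintype.card S * η x ∧ θ N ≤ η y), zrWeight α c η) atTop (𝓝 0) := by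
  set y' : {z // z ≠ x} := ⟨y, hxy.symm⟩
  have hlim : Tendsto (fun N : ℕ => (Fintype.card S : ℝ) ^ α * 1 * ((∑' k, (aZR α (k + θ N))⁻¹) *
      (∑' k, (aZR α k)⁻¹) ^ Fintype.card {z // z ≠ y'})) atTop (𝓝 0) := by
    simpa using (((tendsto_sum_nat_add fun k => (aZR α k)⁻¹).comp hθ).mul_const _).const_mul _
  refine squeeze_zero' (Eventually.of_forall fun N =>
    mul_nonneg (by positivity) (sum_nonneg fun η _ => zrWeight_nonneg hc0 η)) ?_ hlim
  filter_upwards [eventually_gt_atTop 0] with N hN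
  let s : {z // z ≠ x} → Finset ℕ := fun z =>
    if z = y' then (range (N + 1)).filter (θ N ≤ ·) else range (N + 1)
  have hs : ∀ η ∈ (confs S N).filter (fun η => N ≤ Fintype.card S * η x ∧ θ N ≤ η y),
      ∀ z, η z ∈ s z := by
    intro η hη z
    obtain ⟨hη, -, hθη⟩ := mem_filter.1 hη
    by_cases hz : z = y'
    · subst hz
      simpa [s] using ⟨Nat.le_of_lt_succ (mem_range.1 (mem_range_of_mem_confs hη y)), hθη⟩
    · simpa [s, hz] using mem_range_of_mem_confs hη z
  refine (rpow_mul_sum_zrWeight_le (zero_lt_one.trans hα).le hc0 hc1 hN (filter_subset _ _)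
    (fun η hη => (mem_filter.1 hη).2.1) hs).trans ?_
  have hy : ∑ k ∈ s y', c y ^ k / aZR α k ≤ ∑' k, (aZR α (k + θ N))⁻¹ := by
    simp only [s, if_pos rfl]
    exact sum_pow_div_aZR_le_tsum hα (hc0 y) (hc1 y) fun k hk => (mem_filter.1 hk).2
  have hrest := prod_sum_pow_div_aZR_le hα (c := fun z : {z // z ≠ y'} => c z)
    (fun z => hc0 z) (fun z => hc1 z) fun z => s z
  rw [Fintype.prod_eq_mul_prod_subtype_ne _ y']
  refine mul_le_mul (mul_le_mul_of_nonneg_left (pow_le_one₀ (hc0 x) (hc1 x)) (by positivity))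
    (mul_le_mul hy hrest (prod_nonneg fun z _ => sum_nonneg fun k _ => pow_div_aZR_nonneg (hc0 z) k)
      (tsum_nonneg fun k => (inv_pos.2 (aZR_pos α _)).le))
    (mul_nonneg (sum_nonneg fun k _ => pow_div_aZR_nonneg (hc0 y) k)
      (prod_nonneg fun z _ => sum_nonneg fun k _ => pow_div_aZR_nonneg (hc0 z) k)) (by positivity)

lemma tendsto_rpow_mul_sum_zrWeight_filter_large (hα : 1 < α) (hc0 : ∀ x, 0 ≤ c x)
    (hc1 : ∀ x, c x ≤ 1) {A : ℕ → Finset (S → ℕ)} (hA : ∀ N, A N ⊆ confs S N)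
    {θ : S → ℕ → ℕ} (hθ : ∀ y, Tendsto (θ y) atTop atTop) {x : S}
    (hx : c x < 1 ∨ ∀ N, ∀ η ∈ A N, N ≤ Fintype.card S * η x → ∃ y ≠ x, θ y N ≤ η y) :
    Tendsto (fun N : ℕ => (N : ℝ) ^ α * ∑ η ∈ (A N).filter
      (fun η => N ≤ Fintype.card S * η x), zrWeight α c η) atTop (𝓝 0) := by
  have hW : ∀ B : Finset (S → ℕ), ∀ η ∈ B, 0 ≤ zrWeight α c η :=
    fun _ η _ => zrWeight_nonneg hc0 η
  rcases hx with hx | hx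
  · refine squeeze_zero (fun N => mul_nonneg (by positivity) (sum_nonneg (hW _))) (fun N => ?_)
      (tendsto_rpow_mul_sum_zrWeight_of_lt_one hα hc0 hc1 hx)
    exact mul_le_mul_of_nonneg_left (sum_le_sum_of_subset_of_nonneg
      (filter_subset_filter _ (hA N)) fun η _ _ => hW _ η ‹_›) (by positivity)
  · refine squeeze_zero (fun N => mul_nonneg (by positivity) (sum_nonneg (hW _))) (fun N => ?_)
      (by simpa only [sum_const_zero] using tendsto_finsetSum (univ.erase x) fun y hy =>
        tendsto_rpow_mul_sum_zrWeight_of_tendsto hα hc0 hc1 (ne_of_mem_erase hy).symm (hθ y))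
    rw [← mul_sum]
    refine mul_le_mul_of_nonneg_left ((sum_le_sum_sum_filter_of_forall_exists (hW _)
      (I := univ.erase x) (P := fun y η => θ y N ≤ η y) fun η hη => ?_).trans
        (sum_le_sum fun y _ => sum_le_sum_of_subset_of_nonneg ?_ fun η _ _ => hW _ η ‹_›))
      (by positivity)
    · obtain ⟨hηA, hηx⟩ := mem_filter.1 hη
      obtain ⟨y, hyx, hy⟩ := hx N η hηA hηx
      exact ⟨y, mem_erase.2 ⟨hyx, mem_univ y⟩, hy⟩
    · intro η hη
      simp only [mem_filter] at hη ⊢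
      exact ⟨hA N hη.1.1, hη.1.2, hη.2⟩

theorem tendsto_rpow_mul_sum_zrWeight_zero [Nonempty S] (hα : 1 < α) (hc0 : ∀ x, 0 ≤ c x)
    (hc1 : ∀ x, c x ≤ 1) {A : ℕ → Finset (S → ℕ)} (hA : ∀ N, A N ⊆ confs S N)
    {θ : S → ℕ → ℕ} (hθ : ∀ y, Tendsto (θ y) atTop atTop)
    (hcover : ∀ x, c x < 1 ∨
      ∀ N, ∀ η ∈ A N, N ≤ Fintype.card S * η x → ∃ y ≠ x, θ y N ≤ η y) :
    Tendsto (fun N : ℕ => (N : ℝ) ^ α * ∑ η ∈ A N, zrWeight α c η) atTop (𝓝 0) := by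
  have hW : ∀ B : Finset (S → ℕ), ∀ η ∈ B, 0 ≤ zrWeight α c η :=
    fun _ η _ => zrWeight_nonneg hc0 η
  have hlarge : ∀ N : ℕ, (N : ℝ) ^ α * ∑ η ∈ A N, zrWeight α c η ≤ ∑ x, (N : ℝ) ^ α *
      ∑ η ∈ (A N).filter (fun η => N ≤ Fintype.card S * η x), zrWeight α c η := fun N => by
    rw [← mul_sum]
    refine mul_le_mul_of_nonneg_left (sum_le_sum_sum_filter_of_forall_exists (hW _) fun η hη => ?_)
      (by positivity)
    obtain ⟨x, hx⟩ := exists_le_mul_of_mem_confs (hA N hη)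
    exact ⟨x, mem_univ x, hx⟩
  refine squeeze_zero (fun N => mul_nonneg (by positivity) (sum_nonneg (hW _))) hlarge ?_
  simpa only [sum_const_zero] using tendsto_finsetSum univ fun x _ =>
    tendsto_rpow_mul_sum_zrWeight_filter_large hα hc0 hc1 hA hθ (hcover x)

end ZeroRange

theorem measure_of_DeltaN_vanishes_general (S : Type*) [Fintype S] [DecidableEq S]
    (α : ℝ) (hα : 1 < α)
    (m : S → ℝ) (hm : ∀ x, 0 < m x)
    (Mstar : ℝ) (hMstar : IsGreatest (Set.range m) Mstar)
    (Sstar : Finset S) (hSstar : Sstar = Finset.univ.filter (fun x => m x = Mstar))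
    (mstar : S → ℝ) (hmstar : ∀ x, mstar x = m x / Mstar)
    (Z : ℕ → ℝ) (hZ : ∀ N, Z N = (N : ℝ) ^ α *
      ∑ η ∈ confs S N, ∏ x, mstar x ^ η x / aZR α (η x))
    (μ : ℕ → (S → ℕ) → ℝ)
    (hμ : ∀ N η, μ N η = (N : ℝ) ^ α / Z N * ∏ x, mstar x ^ η x / aZR α (η x))
    (ℓ : ℕ → ℕ) (hℓ : Filter.Tendsto ℓ Filter.atTop Filter.atTop)
    (b : S → ℕ → ℕ)
    (hb : ∀ z ∉ Sstar, Filter.Tendsto (b z) Filter.atTop Filter.atTop)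
    (E : S → ℕ → Finset (S → ℕ))
    (hE : ∀ x N, E x N = (confs S N).filter
      (fun η => N - ℓ N ≤ η x ∧ ∀ z ∉ Sstar, η z ≤ b z N))
    (Δ : ℕ → Finset (S → ℕ))
    (hΔ : ∀ N, Δ N = confs S N \ Sstar.biUnion (fun x => E x N)) :
    Filter.Tendsto (fun N => ∑ η ∈ Δ N, μ N η) Filter.atTop (nhds 0) := by
  obtain ⟨x₀, hx₀⟩ := hMstar.1
  have hM : 0 < Mstar := hx₀ ▸ hm x₀
  have : Nonempty S := ⟨x₀⟩
  have hc0 : ∀ x, 0 ≤ mstar x := fun x => by rw [hmstar]; exact div_nonneg (hm x).le hM.le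
  have hc1 : ∀ x, mstar x ≤ 1 := fun x => by
    rw [hmstar]; exact div_le_one_of_le₀ (hMstar.2 ⟨x, rfl⟩) hM.le
  have hcS : ∀ x, mstar x = 1 ↔ x ∈ Sstar := fun x => by
    rw [hmstar, div_eq_one_iff_eq hM.ne', hSstar, mem_filter]
    simp
  have hcover : ∀ x, mstar x < 1 ∨ ∀ N, ∀ η ∈ Δ N, N ≤ Fintype.card S * η x →
      ∃ y ≠ x, secondSiteThreshold Sstar (ℓ N) (b · N) y ≤ η y := by
    refine fun x => (hc1 x).lt_or_eq.imp id fun hx N η hη _ => ?_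
    rw [hΔ, Finset.mem_sdiff, mem_biUnion] at hη
    exact exists_ne_secondSiteThreshold_le hη.1 ((hcS x).1 hx) fun h =>
      hη.2 ⟨x, (hcS x).1 hx, by rw [hE]; exact mem_filter.2 ⟨hη.1, h⟩⟩
  have hmass := tendsto_rpow_mul_sum_zrWeight_zero hα hc0 hc1 (fun N => hΔ N ▸ sdiff_subset)
    (tendsto_secondSiteThreshold hℓ hb) hcover
  simp only [hμ, hZ]
  refine squeeze_zero' (Eventually.of_forall fun N => sum_nonneg fun η _ => ?_) ?_ hmass
  · exact mul_nonneg (div_nonneg (by positivity) (mul_nonneg (by positivity)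
      (sum_nonneg fun ζ _ => zrWeight_nonneg hc0 ζ))) (zrWeight_nonneg hc0 η)
  · filter_upwards [eventually_ne_atTop 0] with N hN
    exact sum_normalized_zrWeight_le hc0 (by rw [hmstar, hx₀, div_self hM.ne']) hN (Δ N)

theorem measure_of_DeltaN_vanishes (S : Type*) [Fintype S] [DecidableEq S]
    (hκ : 2 ≤ Fintype.card S) (α : ℝ) (hα : 1 < α)
    (m : S → ℝ) (hm : ∀ x, 0 < m x) (hm1 : ∑ x, m x = 1)
    (Mstar : ℝ) (hMstar : IsGreatest (Set.range m) Mstar)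
    (Sstar : Finset S) (hSstar : Sstar = Finset.univ.filter (fun x => m x = Mstar))
    (mstar : S → ℝ) (hmstar : ∀ x, mstar x = m x / Mstar)
    (Z : ℕ → ℝ) (hZ : ∀ N, Z N = (N : ℝ) ^ α *
      ∑ η ∈ confs S N, ∏ x, mstar x ^ η x / aZR α (η x))
    (μ : ℕ → (S → ℕ) → ℝ)
    (hμ : ∀ N η, μ N η = (N : ℝ) ^ α / Z N * ∏ x, mstar x ^ η x / aZR α (η x))
    (ℓ : ℕ → ℕ) (hℓ : Filter.Tendsto ℓ Filter.atTop Filter.atTop)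
    (hℓN : Filter.Tendsto (fun N : ℕ => (ℓ N : ℝ) / (N : ℝ)) Filter.atTop (nhds 0))
    (b : S → ℕ → ℕ)
    (hb : ∀ z ∉ Sstar, Filter.Tendsto (b z) Filter.atTop Filter.atTop)
    (E : S → ℕ → Finset (S → ℕ))
    (hE : ∀ x N, E x N = (confs S N).filter
      (fun η => N - ℓ N ≤ η x ∧ ∀ z ∉ Sstar, η z ≤ b z N))
    (Δ : ℕ → Finset (S → ℕ))
    (hΔ : ∀ N, Δ N = confs S N \ Sstar.biUnion (fun x => E x N)) :
    Filter.Tendsto (fun N => ∑ η ∈ Δ N, μ N η) Filter.atTop (nhds 0) :=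
  measure_of_DeltaN_vanishes_general S α hα m hm Mstar hMstar Sstar hSstar mstar hmstar Z hZ μ hμ ℓ
    hℓ b hb E hE Δ hΔ
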